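/- Let V be a finite-dimensional complex inner product space, let H' and B be self-adjoint linear endomorphisms of V, set H := H' + B, and let M ∈ ℝ be such that every eigenvalue of H' is strictly greater than −M. Define H̄' := H'·E^{H'}((−M,M)) + M·E^{H'}([M,∞)) and H̄ := H̄' + B. Then for all real numbers δ > ε ≥ 0 and every ξ ∈ ℝ, ‖(id_V − E^H((ξ−δ, ξ+δ)))·E^{H̄}([ξ−ε, ξ+ε])‖ ≤ (1/δ)·( ε + (M + ‖B‖ + |ξ| + δ)·‖(id_V − E^{H'}((−M,M)))·E^{H̄}([ξ−ε, ξ+ε])‖ ). -/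

import Mathlib

/-- The spectral projection `E^T(I)` of an endomorphism `T` of a finite-dimensional
complex inner product space: the orthogonal projection onto the span of all
eigenvectors of `T` whose eigenvalue lies in `I ⊆ ℝ`. -/
noncomputable def specProj {V : Type*} [NormedAddCommGroup V] [InnerProductSpace ℂ V]
    [FiniteDimensional ℂ V] (T : V →L[ℂ] V) (I : Set ℝ) : V →L[ℂ] V :=
  (⨆ μ ∈ I, Module.End.eigenspace (↑T : V →ₗ[ℂ] V) (μ : ℂ)).subtypeL.comp
    (Submodule.orthogonalProjection (⨆ μ ∈ I, Module.End.eigenspace (↑T : V →ₗ[ℂ] V) (μ : ℂ)))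

/-- The energy-truncated operator `T̄ := T·E^T((−M,M)) + M·E^T([M,∞))`. -/
noncomputable def etrunc {V : Type*} [NormedAddCommGroup V] [InnerProductSpace ℂ V]
    [FiniteDimensional ℂ V] (T : V →L[ℂ] V) (M : ℝ) : V →L[ℂ] V :=
  T * specProj T (Set.Ioo (-M) M) + (M : ℂ) • specProj T (Set.Ici M)

/-!
Let `y = E^{H̄}([ξ-ε, ξ+ε]) x`, `P = E^H((ξ-δ, ξ+δ))`, `P' = E^{H'}((-M, M))` and `z = y - P' y`.
The truncation `H̄'` agrees with `H'` on the range of `P'`, so `H P' y = H̄ P' y`; and it acts on `z`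
as multiplication by `M`, since all eigenvalues of `H'` exceed `-M` and so `1 - P' = E^{H'}([M, ∞))`.
As `‖(1 - P) v‖ ≤ δ⁻¹ ‖(H - ξ) v‖`, this gives
`δ ‖(1 - P) P' y‖ ≤ ‖(H̄ - ξ) y‖ + ‖(H̄ - ξ) z‖ ≤ ε ‖y‖ + (|M - ξ| + ‖B‖) ‖z‖`,
and `‖(1 - P) z‖ ≤ ‖z‖` accounts for the remaining `δ ‖z‖`. For `M < 0` one has `P' = 0` and
`H̄ = M + B`; an eigenvalue of `M + B` within `ε` of `ξ` then forces `-M ≤ ‖B‖ + |ξ| + ε`.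
-/

open Metric
open scoped InnerProductSpace Classical

theorem OrthonormalBasis.norm_le_mul_norm_of_forall_norm_repr_le {𝕜 E ι : Type*} [RCLike 𝕜]
    [NormedAddCommGroup E] [InnerProductSpace 𝕜 E] [Fintype ι] (b : OrthonormalBasis ι 𝕜 E)
    {y z : E} {c : ℝ} (hc : 0 ≤ c) (h : ∀ i, ‖b.repr y i‖ ≤ c * ‖b.repr z i‖) :
    ‖y‖ ≤ c * ‖z‖ := by
  rw [← b.repr.norm_map y, ← b.repr.norm_map z, EuclideanSpace.norm_eq, EuclideanSpace.norm_eq,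
    ← Real.sqrt_sq hc, ← Real.sqrt_mul (sq_nonneg c), Finset.mul_sum]
  gcongr with i
  rw [← mul_pow]
  exact pow_le_pow_left₀ (norm_nonneg _) (h i) 2

section

variable {V : Type*} [NormedAddCommGroup V] [InnerProductSpace ℂ V] [FiniteDimensional ℂ V]
  {T : V →L[ℂ] V}

theorem specProj_eq_starProjection (T : V →L[ℂ] V) (I : Set ℝ) :
    specProj T I = (⨆ μ ∈ I, Module.End.eigenspace (T : V →ₗ[ℂ] V) (μ : ℂ)).starProjection :=
  rfl

theorem specProj_isSelfAdjoint (T : V →L[ℂ] V) (I : Set ℝ) : IsSelfAdjoint (specProj T I) :=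
  isSelfAdjoint_starProjection _

theorem norm_specProj_apply_le (T : V →L[ℂ] V) (I : Set ℝ) (x : V) :
    ‖specProj T I x‖ ≤ ‖x‖ :=
  Submodule.norm_starProjection_apply_le _ x

theorem norm_sub_specProj_apply_le (T : V →L[ℂ] V) (I : Set ℝ) (x : V) :
    ‖x - specProj T I x‖ ≤ ‖x‖ := by
  rw [specProj_eq_starProjection, ← Submodule.starProjection_orthogonal_val]
  exact Submodule.norm_starProjection_apply_le _ x

theorem specProj_empty (T : V →L[ℂ] V) : specProj T ∅ = 0 := by
  ext x
  simp [specProj_eq_starProjection]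

theorem specProj_Ioo_neg_eq_zero (T : V →L[ℂ] V) {M : ℝ} (hM : M ≤ 0) :
    specProj T (Set.Ioo (-M) M) = 0 := by
  rw [Set.Ioo_eq_empty (by linarith), specProj_empty]

theorem specProj_apply_of_apply_eq_smul (hT : IsSelfAdjoint T) {v : V} {μ : ℝ}
    (hv : T v = (μ : ℂ) • v) (I : Set ℝ) : specProj T I v = if μ ∈ I then v else 0 := by
  have hv' : v ∈ Module.End.eigenspace (T : V →ₗ[ℂ] V) μ := Module.End.mem_eigenspace_iff.2 hv
  rw [specProj_eq_starProjection]
  split_ifs with hμ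
  · refine Submodule.starProjection_eq_self_iff.2 ?_
    exact Submodule.mem_iSup_of_mem μ (Submodule.mem_iSup_of_mem hμ hv')
  · refine (Submodule.starProjection_apply_eq_zero_iff _).2 (Submodule.IsOrtho.le ?_ hv')
    simp only [Submodule.isOrtho_iSup_right]
    intro ν hν
    exact hT.isSymmetric.orthogonalFamily_eigenspaces.isOrtho
      (by exact_mod_cast fun h : μ = ν => hμ (h ▸ hν))

theorem repr_apply_of_apply_eq_smul (hT : IsSelfAdjoint T) {ι : Type*} [Fintype ι]
    {b : OrthonormalBasis ι ℂ V} {μ : ι → ℝ} (hb : ∀ i, T (b i) = (μ i : ℂ) • b i)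
    (x : V) (i : ι) : b.repr (T x) i = μ i * b.repr x i := by
  rw [b.repr_apply_apply, b.repr_apply_apply, ← ContinuousLinearMap.coe_coe,
    ← hT.isSymmetric (b i) x, ContinuousLinearMap.coe_coe, hb, inner_smul_left,
    Complex.conj_ofReal]

theorem repr_specProj_of_apply_eq_smul (hT : IsSelfAdjoint T) {ι : Type*} [Fintype ι]
    {b : OrthonormalBasis ι ℂ V} {μ : ι → ℝ} (hb : ∀ i, T (b i) = (μ i : ℂ) • b i)
    (I : Set ℝ) (x : V) (i : ι) :
    b.repr (specProj T I x) i = if μ i ∈ I then b.repr x i else 0 := by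
  rw [b.repr_apply_apply, b.repr_apply_apply, ← ContinuousLinearMap.coe_coe,
    ← (specProj_isSelfAdjoint T I).isSymmetric (b i) x, ContinuousLinearMap.coe_coe,
    specProj_apply_of_apply_eq_smul hT (hb i)]
  split_ifs <;> simp

theorem repr_apply_sub_smul_of_apply_eq_smul (hT : IsSelfAdjoint T) {ι : Type*} [Fintype ι]
    {b : OrthonormalBasis ι ℂ V} {μ : ι → ℝ} (hb : ∀ i, T (b i) = (μ i : ℂ) • b i)
    (ξ : ℝ) (x : V) (i : ι) :
    b.repr (T x - (ξ : ℂ) • x) i = (μ i - ξ : ℝ) * b.repr x i := by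
  simp only [map_sub, map_smul, PiLp.sub_apply, PiLp.smul_apply, smul_eq_mul,
    repr_apply_of_apply_eq_smul hT hb]
  push_cast
  ring

theorem IsSelfAdjoint.exists_orthonormalBasis_apply_eq_smul (hT : IsSelfAdjoint T) :
    ∃ (b : OrthonormalBasis (Fin (Module.finrank ℂ V)) ℂ V) (μ : Fin (Module.finrank ℂ V) → ℝ),
      ∀ i, T (b i) = (μ i : ℂ) • b i :=
  ⟨_, _, hT.isSymmetric.apply_eigenvectorBasis rfl⟩

theorem specProj_specProj (hT : IsSelfAdjoint T) (I J : Set ℝ) (x : V) :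
    specProj T I (specProj T J x) = specProj T (I ∩ J) x := by
  obtain ⟨b, μ, hb⟩ := hT.exists_orthonormalBasis_apply_eq_smul
  refine b.repr.injective (PiLp.ext fun i => ?_)
  simp only [repr_specProj_of_apply_eq_smul hT hb, Set.mem_inter_iff]
  split_ifs <;> tauto

theorem specProj_compl (hT : IsSelfAdjoint T) (I : Set ℝ) (x : V) :
    specProj T Iᶜ x = x - specProj T I x := by
  obtain ⟨b, μ, hb⟩ := hT.exists_orthonormalBasis_apply_eq_smul
  refine b.repr.injective (PiLp.ext fun i => ?_)
  simp only [map_sub, PiLp.sub_apply, repr_specProj_of_apply_eq_smul hT hb, Set.mem_compl_iff]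
  split_ifs <;> simp

theorem specProj_congr (hT : IsSelfAdjoint T) {I J : Set ℝ}
    (h : ∀ ν : ℝ, Module.End.HasEigenvalue (T : V →ₗ[ℂ] V) ν → (ν ∈ I ↔ ν ∈ J)) :
    specProj T I = specProj T J := by
  obtain ⟨b, μ, hb⟩ := hT.exists_orthonormalBasis_apply_eq_smul
  have hμ : ∀ i, Module.End.HasEigenvalue (T : V →ₗ[ℂ] V) (μ i) := fun i =>
    Module.End.hasEigenvalue_of_hasEigenvector
      ⟨Module.End.mem_eigenspace_iff.2 (hb i), b.orthonormal.ne_zero i⟩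
  ext x
  refine b.repr.injective (PiLp.ext fun i => ?_)
  simp only [repr_specProj_of_apply_eq_smul hT hb, h _ (hμ i)]

theorem commute_specProj (hT : IsSelfAdjoint T) (I : Set ℝ) : Commute T (specProj T I) := by
  obtain ⟨b, μ, hb⟩ := hT.exists_orthonormalBasis_apply_eq_smul
  ext x
  refine b.repr.injective (PiLp.ext fun i => ?_)
  simp only [mul_apply_eq_comp, repr_apply_of_apply_eq_smul hT hb,
    repr_specProj_of_apply_eq_smul hT hb]
  split_ifs <;> simp

theorem norm_apply_sub_smul_specProj_le (hT : IsSelfAdjoint T) {I : Set ℝ} {ξ r : ℝ}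
    (hr : 0 ≤ r) (hI : I ⊆ closedBall ξ r) (x : V) :
    ‖T (specProj T I x) - (ξ : ℂ) • specProj T I x‖ ≤ r * ‖specProj T I x‖ := by
  obtain ⟨b, μ, hb⟩ := hT.exists_orthonormalBasis_apply_eq_smul
  refine b.norm_le_mul_norm_of_forall_norm_repr_le hr fun i => ?_
  rw [repr_apply_sub_smul_of_apply_eq_smul hT hb, norm_mul, Complex.norm_real,
    repr_specProj_of_apply_eq_smul hT hb]
  split_ifs with hi
  · exact mul_le_mul_of_nonneg_right (hI hi) (norm_nonneg _)
  · simp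

theorem norm_sub_specProj_ball_le (hT : IsSelfAdjoint T) {ξ r : ℝ} (hr : 0 < r) (x : V) :
    ‖x - specProj T (ball ξ r) x‖ ≤ r⁻¹ * ‖T x - (ξ : ℂ) • x‖ := by
  obtain ⟨b, μ, hb⟩ := hT.exists_orthonormalBasis_apply_eq_smul
  refine b.norm_le_mul_norm_of_forall_norm_repr_le (inv_nonneg.2 hr.le) fun i => ?_
  rw [← specProj_compl hT, repr_apply_sub_smul_of_apply_eq_smul hT hb, norm_mul,
    Complex.norm_real, repr_specProj_of_apply_eq_smul hT hb]
  split_ifs with hi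
  · rw [← mul_assoc, Real.norm_eq_abs, ← Real.dist_eq]
    exact le_mul_of_one_le_left (norm_nonneg _) ((one_le_inv_mul₀ hr).2 (not_lt.1 hi))
  · simp only [norm_zero]
    positivity

theorem etrunc_isSelfAdjoint (hT : IsSelfAdjoint T) (M : ℝ) : IsSelfAdjoint (etrunc T M) := by
  have hMc : IsSelfAdjoint (M : ℂ) := Complex.conj_ofReal M
  exact ((hT.commute_iff (specProj_isSelfAdjoint T _)).1 (commute_specProj hT _)).add
    (hMc.smul (specProj_isSelfAdjoint T _))

theorem etrunc_apply_specProj_Ioo (hT : IsSelfAdjoint T) (M : ℝ) (x : V) :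
    etrunc T M (specProj T (Set.Ioo (-M) M) x) = T (specProj T (Set.Ioo (-M) M) x) := by
  have hdisj : Set.Ici M ∩ Set.Ioo (-M) M = ∅ :=
    ((Set.Ici_disjoint_Iio le_rfl).mono_right Set.Ioo_subset_Iio_self).inter_eq
  simp [etrunc, mul_apply_eq_comp, specProj_specProj hT, hdisj, specProj_empty]

theorem etrunc_apply_of_specProj_Ioo_eq_zero (hT : IsSelfAdjoint T) {M : ℝ}
    (hM : ∀ μ : ℝ, Module.End.HasEigenvalue (T : V →ₗ[ℂ] V) μ → -M < μ) {z : V}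
    (hz : specProj T (Set.Ioo (-M) M) z = 0) : etrunc T M z = (M : ℂ) • z := by
  have hIci : specProj T (Set.Ici M) = specProj T (Set.Ioo (-M) M)ᶜ :=
    specProj_congr hT fun ν hν => by
      simp only [Set.mem_Ici, Set.mem_compl_iff, Set.mem_Ioo, hM ν hν, true_and, not_lt]
  simp [etrunc, mul_apply_eq_comp, hz, hIci, specProj_compl hT]

theorem mul_norm_sub_specProj_ball_le_of_apply_sub_eq {H S : V →L[ℂ] V} (hH : IsSelfAdjoint H)
    {δ ε ξ a : ℝ} (hδ : 0 < δ) {y z : V} (hyz : H (y - z) = S (y - z))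
    (hy : ‖S y - (ξ : ℂ) • y‖ ≤ ε * ‖y‖) (hz : ‖S z - (ξ : ℂ) • z‖ ≤ a * ‖z‖) :
    δ * ‖y - specProj H (ball ξ δ) y‖ ≤ ε * ‖y‖ + (a + δ) * ‖z‖ := by
  set P := specProj H (ball ξ δ)
  have hsplit : y - P y = ((y - z) - P (y - z)) + (z - P z) := by rw [map_sub]; abel
  have hp : δ * ‖(y - z) - P (y - z)‖ ≤ ε * ‖y‖ + a * ‖z‖ :=
    calc δ * ‖(y - z) - P (y - z)‖
        ≤ δ * (δ⁻¹ * ‖H (y - z) - (ξ : ℂ) • (y - z)‖) := by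
          gcongr; exact norm_sub_specProj_ball_le hH hδ _
      _ = ‖(S y - (ξ : ℂ) • y) - (S z - (ξ : ℂ) • z)‖ := by
          rw [mul_inv_cancel_left₀ hδ.ne', hyz, map_sub, smul_sub, sub_sub_sub_comm]
      _ ≤ ε * ‖y‖ + a * ‖z‖ := (norm_sub_le _ _).trans (add_le_add hy hz)
  calc δ * ‖y - P y‖ ≤ δ * ‖(y - z) - P (y - z)‖ + δ * ‖z - P z‖ := by
        rw [hsplit, ← mul_add]; gcongr; exact norm_add_le _ _
    _ ≤ ε * ‖y‖ + (a + δ) * ‖z‖ := by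
        have hz' := norm_sub_specProj_apply_le H (ball ξ δ) z
        nlinarith

variable {H' B : V →L[ℂ] V} {M : ℝ}

theorem norm_etrunc_add_apply_sub_smul_le (hH' : IsSelfAdjoint H')
    (hM : ∀ μ : ℝ, Module.End.HasEigenvalue (H' : V →ₗ[ℂ] V) μ → -M < μ) (ξ : ℝ) {z : V}
    (hz : specProj H' (Set.Ioo (-M) M) z = 0) :
    ‖(etrunc H' M + B) z - (ξ : ℂ) • z‖ ≤ (|M - ξ| + ‖B‖) * ‖z‖ := by
  rw [add_apply, etrunc_apply_of_specProj_Ioo_eq_zero hH' hM hz]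
  calc ‖(M : ℂ) • z + B z - (ξ : ℂ) • z‖ = ‖((M - ξ : ℝ) : ℂ) • z + B z‖ := by
        congr 1; push_cast; module
    _ ≤ |M - ξ| * ‖z‖ + ‖B‖ * ‖z‖ := by
        refine (norm_add_le _ _).trans (add_le_add ?_ (B.le_opNorm z))
        rw [norm_smul, Complex.norm_real, Real.norm_eq_abs]
    _ = (|M - ξ| + ‖B‖) * ‖z‖ := by ring

theorem neg_le_of_norm_etrunc_add_apply_sub_smul_le (hH' : IsSelfAdjoint H')
    (hM : ∀ μ : ℝ, Module.End.HasEigenvalue (H' : V →ₗ[ℂ] V) μ → -M < μ) (hM0 : M < 0)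
    {ε ξ : ℝ} {y : V} (hy0 : y ≠ 0) (hy : ‖(etrunc H' M + B) y - (ξ : ℂ) • y‖ ≤ ε * ‖y‖) :
    -M ≤ ‖B‖ + |ξ| + ε := by
  have hMy := etrunc_apply_of_specProj_Ioo_eq_zero hH' hM (z := y)
    (by rw [specProj_Ioo_neg_eq_zero H' hM0.le, zero_apply])
  have hnorm : |M - ξ| * ‖y‖ ≤ (ε + ‖B‖) * ‖y‖ :=
    calc |M - ξ| * ‖y‖ = ‖((etrunc H' M + B) y - (ξ : ℂ) • y) - B y‖ := by
          rw [add_apply, hMy, ← Real.norm_eq_abs, ← Complex.norm_real, ← norm_smul]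
          congr 1; push_cast; module
      _ ≤ (ε + ‖B‖) * ‖y‖ := by
          rw [add_mul]; exact (norm_sub_le _ _).trans (add_le_add hy (B.le_opNorm y))
  have hMξ := le_of_mul_le_mul_right hnorm (norm_pos_iff.2 hy0)
  linarith [neg_abs_le ξ, le_abs_self (ξ - M), abs_sub_comm M ξ]

theorem mul_norm_sub_specProj_ball_le (hH' : IsSelfAdjoint H') (hB : IsSelfAdjoint B)
    (hM : ∀ μ : ℝ, Module.End.HasEigenvalue (H' : V →ₗ[ℂ] V) μ → -M < μ) {ε δ ξ : ℝ}
    (hδ : 0 < δ) {y : V} (hy : ‖(etrunc H' M + B) y - (ξ : ℂ) • y‖ ≤ ε * ‖y‖) :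
    δ * ‖y - specProj (H' + B) (ball ξ δ) y‖ ≤
      ε * ‖y‖ + (M + ‖B‖ + |ξ| + δ) * ‖y - specProj H' (Set.Ioo (-M) M) y‖ := by
  rcases le_or_gt 0 M with hM0 | hM0
  · set P' := specProj H' (Set.Ioo (-M) M)
    have hP'z : P' (y - P' y) = 0 := by
      rw [map_sub, specProj_specProj hH', Set.inter_self, sub_self]
    have hyz : (H' + B) (y - (y - P' y)) = (etrunc H' M + B) (y - (y - P' y)) := by
      rw [sub_sub_cancel, add_apply, add_apply, etrunc_apply_specProj_Ioo hH']
    have hMξ : |M - ξ| ≤ M + |ξ| := (abs_sub M ξ).trans_eq (by rw [abs_of_nonneg hM0])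
    calc δ * ‖y - specProj (H' + B) (ball ξ δ) y‖
        ≤ ε * ‖y‖ + (|M - ξ| + ‖B‖ + δ) * ‖y - P' y‖ :=
          mul_norm_sub_specProj_ball_le_of_apply_sub_eq (hH'.add hB) hδ hyz hy
            (norm_etrunc_add_apply_sub_smul_le hH' hM ξ hP'z)
      _ ≤ ε * ‖y‖ + (M + ‖B‖ + |ξ| + δ) * ‖y - P' y‖ := by gcongr ε * ‖y‖ + ?_ * _; linarith
  · rcases eq_or_ne y 0 with rfl | hy0
    · simp
    have hMB := neg_le_of_norm_etrunc_add_apply_sub_smul_le hH' hM hM0 hy0 hy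
    have hPy := norm_sub_specProj_apply_le (H' + B) (ball ξ δ) y
    rw [specProj_Ioo_neg_eq_zero H' hM0.le, zero_apply, sub_zero]
    nlinarith [norm_nonneg y]

end

/-- Shifted decomposition estimate: with `H = H' + B`, `H̄' := etrunc H' M`,
`H̄ := H̄' + B`, for `δ > ε ≥ 0` and `ξ ∈ ℝ`,
`‖(I − E^H((ξ−δ,ξ+δ)))·E^{H̄}([ξ−ε,ξ+ε])‖
  ≤ (1/δ)(ε + (M+‖B‖+|ξ|+δ)·‖(I − E^{H'}((−M,M)))·E^{H̄}([ξ−ε,ξ+ε])‖)`. -/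
theorem stmt_11 {V : Type*} [NormedAddCommGroup V] [InnerProductSpace ℂ V]
    [FiniteDimensional ℂ V]
    (H' B : V →L[ℂ] V) (hH' : IsSelfAdjoint H') (hB : IsSelfAdjoint B)
    (M : ℝ) (hM : ∀ μ : ℝ, Module.End.HasEigenvalue (↑H' : V →ₗ[ℂ] V) (μ : ℂ) → -M < μ) :
    ∀ (ε δ ξ : ℝ), 0 ≤ ε → ε < δ →
      ‖((1 : V →L[ℂ] V) - specProj (H' + B) (Set.Ioo (ξ - δ) (ξ + δ))) *
          specProj (etrunc H' M + B) (Set.Icc (ξ - ε) (ξ + ε))‖ ≤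
        (1 / δ) * (ε + (M + ‖B‖ + |ξ| + δ) *
          ‖((1 : V →L[ℂ] V) - specProj H' (Set.Ioo (-M) M)) *
              specProj (etrunc H' M + B) (Set.Icc (ξ - ε) (ξ + ε))‖) := by
  intro ε δ ξ hε hεδ
  have hδ : 0 < δ := hε.trans_lt hεδ
  set Q := specProj (etrunc H' M + B) (Set.Icc (ξ - ε) (ξ + ε))
  have hQ : ∀ x, ‖(etrunc H' M + B) (Q x) - (ξ : ℂ) • Q x‖ ≤ ε * ‖Q x‖ :=
    norm_apply_sub_smul_specProj_le ((etrunc_isSelfAdjoint hH' M).add hB) hε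
      (Real.closedBall_eq_Icc ▸ subset_rfl)
  by_cases hQ0 : Q = 0
  · rw [hQ0, mul_zero, mul_zero, norm_zero, mul_zero, add_zero]
    positivity
  have hC : 0 ≤ M + ‖B‖ + |ξ| + δ := by
    rcases le_or_gt 0 M with hM0 | hM0
    · positivity
    obtain ⟨x, hx⟩ : ∃ x, Q x ≠ 0 := by
      by_contra! h
      exact hQ0 (ContinuousLinearMap.ext h)
    linarith [neg_le_of_norm_etrunc_add_apply_sub_smul_le hH' hM hM0 hx (hQ x)]
  rw [← Real.ball_eq_Ioo, one_div]
  refine ContinuousLinearMap.opNorm_le_bound _ (by positivity) fun x => ?_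
  rw [mul_assoc, le_inv_mul_iff₀ hδ]
  simp only [mul_apply_eq_comp, sub_apply, one_apply_eq_self]
  calc δ * ‖Q x - specProj (H' + B) (ball ξ δ) (Q x)‖
      ≤ ε * ‖Q x‖ + (M + ‖B‖ + |ξ| + δ) * ‖Q x - specProj H' (Set.Ioo (-M) M) (Q x)‖ :=
        mul_norm_sub_specProj_ball_le hH' hB hM hδ (hQ x)
    _ ≤ ε * ‖x‖ + (M + ‖B‖ + |ξ| + δ) *
          (‖((1 : V →L[ℂ] V) - specProj H' (Set.Ioo (-M) M)) * Q‖ * ‖x‖) := by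
        gcongr
        · exact norm_specProj_apply_le _ _ x
        · exact (((1 : V →L[ℂ] V) - specProj H' (Set.Ioo (-M) M)) * Q).le_opNorm x
    _ = _ := by ring
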